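/- Let σ > 0 and ε ∈ ℝ, and let p = φ_{0,σ} and q = φ_{ε,σ} be the Gaussian densities with variance σ² and means 0 and ε respectively. Given an integer d ≥ 1 and group sizes m₁,…,m_d ∈ ℕ with N = m₁+…+m_d, define probability measures on ℝ^N (coordinates indexed by pairs (j,k), j ∈ {1,…,d}, k ∈ {1,…,m_j}): Q has density ∏_{j=1}^d ∏_{k=1}^{m_j} p(b_j^{(k)}), and P has density (1/d) ∑_{j=1}^d [∏_{k=1}^{m_j} q(b_j^{(k)})] · ∏_{j'≠j} ∏_{k=1}^{m_{j'}} p(b_{j'}^{(k)}). Then TV(P, Q) ≤ (1/(2√d)) · [ (1/d) ∑_{j=1}^d exp(m_j ε²/σ²) − 1 ]^{1/2}, and hence for any hypothesis test distinguishing Q from P the sum of the two error probabilities is at least 1 − (1/(2√d)) · [ (1/d) ∑_{j=1}^d exp(m_j ε²/σ²) − 1 ]^{1/2}. -/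

import Mathlib

/-!
For densities `f`, `g` of probability measures, `|P(A) - Q(A)| = |∫_A (f - g)| ≤ ½ ∫ |f - g|`,
and Cauchy–Schwarz with weight `g` bounds `∫ |f - g|` by the square root of the χ²-divergence
`∫ (f - g)² / g = ∫ f² / g - 1`. For Gaussians `φ_a φ_b / φ_0 = exp (a b / σ²) φ_{a+b}`, so for
products of Gaussians with mean vectors `μ`, `ν` one gets `∫ F_μ F_ν / F_0 = exp (⟨μ, ν⟩ / σ²)`.
The mean vectors of the `d` mixture components are supported on disjoint blocks, hence
`⟨μ_j, μ_j'⟩` is `m_j ε²` for `j = j'` and `0` otherwise, and the χ²-divergence of the uniform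
mixture from `Q` is `(1/d) ((1/d) ∑_j exp (m_j ε² / σ²) - 1)`. A test errs with total
probability `P(A) + Q(Aᶜ) = 1 - (Q(A) - P(A))`.
-/

open MeasureTheory

noncomputable def tvDist {Ω : Type*} [MeasurableSpace Ω] (P Q : Measure Ω) : ℝ :=
  ⨆ s : {s : Set Ω // MeasurableSet s}, |(P s.1).toReal - (Q s.1).toReal|

open ProbabilityTheory Finset Real
open scoped NNReal

section Densities

variable {α : Type*} [MeasurableSpace α] {μ : Measure α} {f g : α → ℝ}

theorem setIntegral_le_half_integral_abs {h : α → ℝ} (hh : Integrable h μ)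
    (h0 : ∫ x, h x ∂μ = 0) (s : Set α) :
    ∫ x in s, h x ∂μ ≤ (1 / 2) * ∫ x, |h x| ∂μ := by
  have hpos : Integrable (fun x => (h x + |h x|) / 2) μ := (hh.add hh.abs).div_const 2
  calc ∫ x in s, h x ∂μ ≤ ∫ x in s, (h x + |h x|) / 2 ∂μ :=
        setIntegral_mono hh.integrableOn hpos.integrableOn fun x => by
          linarith [le_abs_self (h x)]
    _ ≤ ∫ x, (h x + |h x|) / 2 ∂μ :=
        setIntegral_le_integral hpos (ae_of_all _ fun x => by
          change 0 ≤ (h x + |h x|) / 2; linarith [neg_abs_le (h x)])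
    _ = (1 / 2) * ∫ x, |h x| ∂μ := by
        rw [integral_div, integral_add hh hh.abs, h0]; ring

theorem abs_setIntegral_le_half_integral_abs {h : α → ℝ} (hh : Integrable h μ)
    (h0 : ∫ x, h x ∂μ = 0) (s : Set α) :
    |∫ x in s, h x ∂μ| ≤ (1 / 2) * ∫ x, |h x| ∂μ := by
  have hneg := setIntegral_le_half_integral_abs (h := fun x => -h x) hh.neg
    (by rw [integral_neg, h0, neg_zero]) s
  simp only [integral_neg, abs_neg] at hneg
  exact abs_le.2 ⟨by linarith, setIntegral_le_half_integral_abs hh h0 s⟩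

theorem MeasureTheory.Integrable.memLp_two_sqrt {u : α → ℝ} (hu : Integrable u μ)
    (hu0 : ∀ x, 0 ≤ u x) :
    MemLp (fun x => √(u x)) (ENNReal.ofReal 2) μ := by
  rw [ENNReal.ofReal_ofNat, memLp_two_iff_integrable_sq
    (continuous_sqrt.comp_aestronglyMeasurable hu.aestronglyMeasurable)]
  simpa only [sq_sqrt (hu0 _)] using hu

theorem integral_abs_le_sqrt_integral_sq_div_mul_sqrt {h : α → ℝ} (hg : Integrable g μ)
    (hg_pos : ∀ x, 0 < g x) (hhg : Integrable (fun x => h x ^ 2 / g x) μ) :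
    ∫ x, |h x| ∂μ ≤ √(∫ x, h x ^ 2 / g x ∂μ) * √(∫ x, g x ∂μ) := by
  have hhg0 : ∀ x, 0 ≤ h x ^ 2 / g x := fun x => div_nonneg (sq_nonneg _) (hg_pos x).le
  have key := integral_mul_le_Lp_mul_Lq_of_nonneg HolderConjugate.two_two
    (ae_of_all μ fun x => sqrt_nonneg _) (ae_of_all μ fun x => sqrt_nonneg _)
    (hhg.memLp_two_sqrt hhg0) (hg.memLp_two_sqrt fun x => (hg_pos x).le)
  have habs : ∀ x, √(h x ^ 2 / g x) * √(g x) = |h x| := fun x => by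
    rw [← sqrt_mul (hhg0 x), div_mul_cancel₀ _ (hg_pos x).ne', sqrt_sq_eq_abs]
  simp only [habs, rpow_two, sq_sqrt (hhg0 _), sq_sqrt (hg_pos _).le] at key
  simpa only [sqrt_eq_rpow] using key

theorem sq_sub_div_eq {a b : ℝ} (hb : b ≠ 0) : (a - b) ^ 2 / b = a ^ 2 / b - 2 * a + b := by
  field_simp
  ring

theorem integrable_sq_sub_div (hf : Integrable f μ) (hg : Integrable g μ)
    (hfg : Integrable (fun x => f x ^ 2 / g x) μ) (hg0 : ∀ x, g x ≠ 0) :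
    Integrable (fun x => (f x - g x) ^ 2 / g x) μ := by
  simp only [sq_sub_div_eq (hg0 _)]
  exact (hfg.sub (hf.const_mul 2)).add hg

theorem integral_sq_sub_div (hf : Integrable f μ) (hg : Integrable g μ)
    (hfg : Integrable (fun x => f x ^ 2 / g x) μ) (hg0 : ∀ x, g x ≠ 0) :
    ∫ x, (f x - g x) ^ 2 / g x ∂μ =
      ∫ x, f x ^ 2 / g x ∂μ - 2 * ∫ x, f x ∂μ + ∫ x, g x ∂μ := by
  simp only [sq_sub_div_eq (hg0 _)]
  have hfg' : Integrable (fun x => f x ^ 2 / g x - 2 * f x) μ := hfg.sub (hf.const_mul 2)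
  rw [integral_add hfg' hg, integral_sub hfg (hf.const_mul 2), integral_const_mul]

theorem sq_sum_div {κ : Type*} (s : Finset κ) (F : κ → ℝ) (b : ℝ) :
    (∑ j ∈ s, F j) ^ 2 / b = ∑ j ∈ s, ∑ j' ∈ s, F j * F j' / b := by
  simp only [sq, sum_mul_sum, sum_div]

theorem integrable_sq_sum_div {κ : Type*} (s : Finset κ) {F : κ → α → ℝ}
    (hF : ∀ j j', Integrable (fun x => F j x * F j' x / g x) μ) :
    Integrable (fun x => (∑ j ∈ s, F j x) ^ 2 / g x) μ := by
  simp only [sq_sum_div]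
  exact integrable_finsetSum _ fun j _ => integrable_finsetSum _ fun j' _ => hF j j'

theorem integral_sq_sum_div {κ : Type*} (s : Finset κ) {F : κ → α → ℝ}
    (hF : ∀ j j', Integrable (fun x => F j x * F j' x / g x) μ) :
    ∫ x, (∑ j ∈ s, F j x) ^ 2 / g x ∂μ =
      ∑ j ∈ s, ∑ j' ∈ s, ∫ x, F j x * F j' x / g x ∂μ := by
  simp only [sq_sum_div]
  rw [integral_finsetSum _ fun j _ => integrable_finsetSum _ fun j' _ => hF j j']
  exact sum_congr rfl fun j _ => integral_finsetSum _ fun j' _ => hF j j'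

theorem toReal_withDensity_ofReal_apply (hf : Integrable f μ) (hf0 : ∀ x, 0 ≤ f x) {s : Set α}
    (hs : MeasurableSet s) :
    (μ.withDensity (fun x => ENNReal.ofReal (f x)) s).toReal = ∫ x in s, f x ∂μ := by
  rw [withDensity_apply _ hs, integral_eq_lintegral_of_nonneg_ae (ae_of_all _ hf0)
    hf.aestronglyMeasurable.restrict]

theorem isProbabilityMeasure_withDensity_ofReal (hf : Integrable f μ) (hf0 : ∀ x, 0 ≤ f x)
    (hf1 : ∫ x, f x ∂μ = 1) :
    IsProbabilityMeasure (μ.withDensity fun x => ENNReal.ofReal (f x)) := by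
  refine ⟨?_⟩
  rw [withDensity_apply _ MeasurableSet.univ, Measure.restrict_univ,
    ← ofReal_integral_eq_lintegral_ofReal hf (ae_of_all _ hf0), hf1, ENNReal.ofReal_one]

theorem abs_toReal_withDensity_sub_le (hf : Integrable f μ) (hg : Integrable g μ)
    (hf0 : ∀ x, 0 ≤ f x) (hg_pos : ∀ x, 0 < g x) (hfg : ∫ x, f x ∂μ = ∫ x, g x ∂μ)
    (hchi : Integrable (fun x => (f x - g x) ^ 2 / g x) μ) {s : Set α} (hs : MeasurableSet s) :
    |(μ.withDensity (fun x => ENNReal.ofReal (f x)) s).toReal -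
        (μ.withDensity (fun x => ENNReal.ofReal (g x)) s).toReal| ≤
      (1 / 2) * (√(∫ x, (f x - g x) ^ 2 / g x ∂μ) * √(∫ x, g x ∂μ)) := by
  rw [toReal_withDensity_ofReal_apply hf hf0 hs,
    toReal_withDensity_ofReal_apply hg (fun x => (hg_pos x).le) hs,
    ← integral_sub hf.integrableOn hg.integrableOn]
  calc |∫ x in s, (f x - g x) ∂μ| ≤ (1 / 2) * ∫ x, |f x - g x| ∂μ :=
        abs_setIntegral_le_half_integral_abs (h := fun x => f x - g x) (hf.sub hg)
          (by rw [integral_sub hf hg, hfg, sub_self]) s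
    _ ≤ _ := by
        gcongr
        exact integral_abs_le_sqrt_integral_sq_div_mul_sqrt hg hg_pos hchi

end Densities

section TotalVariation

variable {Ω : Type*} [MeasurableSpace Ω] {P Q : Measure Ω} {B : ℝ}

theorem tvDist_le_of_forall_abs_le (hB : 0 ≤ B)
    (h : ∀ s, MeasurableSet s → |(P s).toReal - (Q s).toReal| ≤ B) : tvDist P Q ≤ B :=
  Real.iSup_le (fun s => h s.1 s.2) hB

theorem one_sub_le_toReal_add_toReal_compl [IsProbabilityMeasure Q] {s : Set Ω}
    (hs : MeasurableSet s) (h : |(P s).toReal - (Q s).toReal| ≤ B) :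
    1 - B ≤ (P s).toReal + (Q sᶜ).toReal := by
  have hcompl := probReal_compl_eq_one_sub (μ := Q) hs
  rw [measureReal_def, measureReal_def] at hcompl
  linarith [neg_abs_le ((P s).toReal - (Q s).toReal)]

end TotalVariation

namespace ProbabilityTheory

theorem gaussianPDFReal_mul_div_gaussianPDFReal_zero (a b : ℝ) {v : ℝ≥0} (hv : v ≠ 0)
    (x : ℝ) :
    gaussianPDFReal a v x * gaussianPDFReal b v x / gaussianPDFReal 0 v x =
      exp (a * b / v) * gaussianPDFReal (a + b) v x := by
  rw [div_eq_iff (gaussianPDFReal_pos 0 v x hv).ne']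
  have hv' : (v : ℝ) ≠ 0 := NNReal.coe_ne_zero.2 hv
  have hexponent : -(x - a) ^ 2 / (2 * v) + -(x - b) ^ 2 / (2 * v) =
      a * b / v + (-(x - (a + b)) ^ 2 / (2 * v) + -(x - 0) ^ 2 / (2 * v)) := by
    field_simp
    ring
  simp only [gaussianPDFReal]
  calc _ = (√(2 * π * v))⁻¹ ^ 2 *
        exp (-(x - a) ^ 2 / (2 * v) + -(x - b) ^ 2 / (2 * v)) := by rw [exp_add]; ring
    _ = _ := by rw [hexponent, exp_add, exp_add]; ring

variable {ι : Type*} [Fintype ι]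

noncomputable def gaussianPDFRealPi (μ : ι → ℝ) (v : ℝ≥0) (x : ι → ℝ) : ℝ :=
  ∏ i, gaussianPDFReal (μ i) v (x i)

theorem gaussianPDFRealPi_nonneg (μ : ι → ℝ) (v : ℝ≥0) (x : ι → ℝ) :
    0 ≤ gaussianPDFRealPi μ v x :=
  prod_nonneg fun _ _ => gaussianPDFReal_nonneg _ _ _

theorem gaussianPDFRealPi_pos (μ : ι → ℝ) {v : ℝ≥0} (hv : v ≠ 0) (x : ι → ℝ) :
    0 < gaussianPDFRealPi μ v x :=
  prod_pos fun _ _ => gaussianPDFReal_pos _ _ _ hv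

theorem integrable_gaussianPDFRealPi (μ : ι → ℝ) (v : ℝ≥0) :
    Integrable (gaussianPDFRealPi μ v) :=
  Integrable.fintype_prod (f := fun i => gaussianPDFReal (μ i) v) fun _ =>
    integrable_gaussianPDFReal _ _

theorem integral_gaussianPDFRealPi_eq_one (μ : ι → ℝ) {v : ℝ≥0} (hv : v ≠ 0) :
    ∫ x, gaussianPDFRealPi μ v x = 1 := by
  unfold gaussianPDFRealPi
  rw [integral_fintype_prod_volume_eq_prod (fun i => gaussianPDFReal (μ i) v)]
  simp only [integral_gaussianPDFReal_eq_one _ hv, prod_const_one]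

theorem gaussianPDFRealPi_mul_div_gaussianPDFRealPi_zero (μ ν : ι → ℝ) {v : ℝ≥0} (hv : v ≠ 0)
    (x : ι → ℝ) :
    gaussianPDFRealPi μ v x * gaussianPDFRealPi ν v x / gaussianPDFRealPi 0 v x =
      ∏ i, exp (μ i * ν i / v) * gaussianPDFReal (μ i + ν i) v (x i) := by
  simp only [gaussianPDFRealPi, Pi.zero_apply, ← prod_mul_distrib, ← prod_div_distrib,
    gaussianPDFReal_mul_div_gaussianPDFReal_zero _ _ hv]

theorem integrable_gaussianPDFRealPi_mul_div (μ ν : ι → ℝ) {v : ℝ≥0} (hv : v ≠ 0) :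
    Integrable fun x =>
      gaussianPDFRealPi μ v x * gaussianPDFRealPi ν v x / gaussianPDFRealPi 0 v x := by
  simp only [gaussianPDFRealPi_mul_div_gaussianPDFRealPi_zero μ ν hv]
  exact Integrable.fintype_prod
    (f := fun i y => exp (μ i * ν i / v) * gaussianPDFReal (μ i + ν i) v y)
    fun _ => (integrable_gaussianPDFReal _ _).const_mul _

theorem integral_gaussianPDFRealPi_mul_div (μ ν : ι → ℝ) {v : ℝ≥0} (hv : v ≠ 0) :
    ∫ x, gaussianPDFRealPi μ v x * gaussianPDFRealPi ν v x / gaussianPDFRealPi 0 v x =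
      exp ((∑ i, μ i * ν i) / v) := by
  simp only [gaussianPDFRealPi_mul_div_gaussianPDFRealPi_zero μ ν hv]
  rw [integral_fintype_prod_volume_eq_prod
    (fun i y => exp (μ i * ν i / v) * gaussianPDFReal (μ i + ν i) v y)]
  simp only [integral_const_mul, integral_gaussianPDFReal_eq_one _ hv, mul_one, sum_div,
    exp_sum]

variable {κ : Type*} [Fintype κ]

noncomputable def uniformGaussianMixturePDF (μ : κ → ι → ℝ) (v : ℝ≥0) (x : ι → ℝ) : ℝ :=
  (Fintype.card κ : ℝ)⁻¹ * ∑ j, gaussianPDFRealPi (μ j) v x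

theorem uniformGaussianMixturePDF_nonneg (μ : κ → ι → ℝ) (v : ℝ≥0) (x : ι → ℝ) :
    0 ≤ uniformGaussianMixturePDF μ v x :=
  mul_nonneg (by positivity) (sum_nonneg fun _ _ => gaussianPDFRealPi_nonneg _ _ _)

theorem integrable_uniformGaussianMixturePDF (μ : κ → ι → ℝ) (v : ℝ≥0) :
    Integrable (uniformGaussianMixturePDF μ v) :=
  (integrable_finsetSum _ fun _ _ => integrable_gaussianPDFRealPi _ _).const_mul _

theorem integral_uniformGaussianMixturePDF_eq_one [Nonempty κ] (μ : κ → ι → ℝ) {v : ℝ≥0}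
    (hv : v ≠ 0) : ∫ x, uniformGaussianMixturePDF μ v x = 1 := by
  unfold uniformGaussianMixturePDF
  rw [integral_const_mul, integral_finsetSum _ fun _ _ => integrable_gaussianPDFRealPi _ _]
  simp only [integral_gaussianPDFRealPi_eq_one _ hv, sum_const, card_univ, nsmul_eq_mul, mul_one]
  exact inv_mul_cancel₀ (Nat.cast_ne_zero.2 Fintype.card_ne_zero)

theorem sq_uniformGaussianMixturePDF_div (μ : κ → ι → ℝ) (v : ℝ≥0) (x : ι → ℝ) :
    uniformGaussianMixturePDF μ v x ^ 2 / gaussianPDFRealPi 0 v x =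
      (Fintype.card κ : ℝ)⁻¹ ^ 2 *
        ((∑ j, gaussianPDFRealPi (μ j) v x) ^ 2 / gaussianPDFRealPi 0 v x) := by
  rw [uniformGaussianMixturePDF, mul_pow, mul_div_assoc]

theorem integrable_sq_uniformGaussianMixturePDF_div (μ : κ → ι → ℝ) {v : ℝ≥0} (hv : v ≠ 0) :
    Integrable fun x => uniformGaussianMixturePDF μ v x ^ 2 / gaussianPDFRealPi 0 v x := by
  simp only [sq_uniformGaussianMixturePDF_div]
  exact (integrable_sq_sum_div _ fun j j' =>
    integrable_gaussianPDFRealPi_mul_div (μ j) (μ j') hv).const_mul _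

theorem integral_sq_uniformGaussianMixturePDF_sub_div [Nonempty κ] (μ : κ → ι → ℝ) {v : ℝ≥0}
    (hv : v ≠ 0) :
    ∫ x, (uniformGaussianMixturePDF μ v x - gaussianPDFRealPi 0 v x) ^ 2 /
        gaussianPDFRealPi 0 v x =
      (Fintype.card κ : ℝ)⁻¹ ^ 2 * ∑ j, ∑ j', exp ((∑ i, μ j i * μ j' i) / v) - 1 := by
  rw [integral_sq_sub_div (integrable_uniformGaussianMixturePDF μ v)
    (integrable_gaussianPDFRealPi 0 v) (integrable_sq_uniformGaussianMixturePDF_div μ hv)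
    fun x => (gaussianPDFRealPi_pos 0 hv x).ne']
  simp only [sq_uniformGaussianMixturePDF_div]
  rw [integral_const_mul, integral_sq_sum_div _ fun j j' =>
      integrable_gaussianPDFRealPi_mul_div (μ j) (μ j') hv,
    integral_uniformGaussianMixturePDF_eq_one μ hv, integral_gaussianPDFRealPi_eq_one 0 hv]
  simp only [integral_gaussianPDFRealPi_mul_div _ _ hv]
  ring

theorem abs_toReal_withDensity_uniformGaussianMixturePDF_sub_le [Nonempty κ] (μ : κ → ι → ℝ)
    {v : ℝ≥0} (hv : v ≠ 0) {s : Set (ι → ℝ)} (hs : MeasurableSet s) :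
    |((volume.withDensity fun x =>
          ENNReal.ofReal (uniformGaussianMixturePDF μ v x)) s).toReal -
        ((volume.withDensity fun x => ENNReal.ofReal (gaussianPDFRealPi 0 v x)) s).toReal| ≤
      (1 / 2) *
        √((Fintype.card κ : ℝ)⁻¹ ^ 2 * ∑ j, ∑ j', exp ((∑ i, μ j i * μ j' i) / v) - 1) := by
  have hchi := integrable_sq_sub_div (integrable_uniformGaussianMixturePDF μ v)
    (integrable_gaussianPDFRealPi 0 v) (integrable_sq_uniformGaussianMixturePDF_div μ hv)
    fun x => (gaussianPDFRealPi_pos 0 hv x).ne'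
  have h := abs_toReal_withDensity_sub_le (integrable_uniformGaussianMixturePDF μ v)
    (integrable_gaussianPDFRealPi 0 v) (uniformGaussianMixturePDF_nonneg μ v)
    (gaussianPDFRealPi_pos 0 hv)
    ((integral_uniformGaussianMixturePDF_eq_one μ hv).trans
      (integral_gaussianPDFRealPi_eq_one 0 hv).symm) hchi hs
  rwa [integral_sq_uniformGaussianMixturePDF_sub_div μ hv,
    integral_gaussianPDFRealPi_eq_one 0 hv, sqrt_one, mul_one] at h

end ProbabilityTheory

section BlockMeans

variable {κ : Type*} [Fintype κ] [DecidableEq κ] {ι : κ → Type*} [∀ j, Fintype (ι j)]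

def blockMean (ε : ℝ) (j : κ) (i : Σ j, ι j) : ℝ :=
  if i.1 = j then ε else 0

theorem prod_sigma_ite_fst {M : Type*} [CommMonoid M] (j : κ) (a b : (Σ j, ι j) → M) :
    ∏ i, (if i.1 = j then a i else b i) =
      (∏ k, a ⟨j, k⟩) * ∏ j' ∈ univ.erase j, ∏ k, b ⟨j', k⟩ := by
  rw [← univ_sigma_univ, prod_sigma, ← mul_prod_erase univ _ (mem_univ j)]
  simp only [if_true]
  congr 1
  exact prod_congr rfl fun j' hj' => prod_congr rfl fun k _ => if_neg (ne_of_mem_erase hj')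

theorem gaussianPDFRealPi_blockMean (ε : ℝ) (v : ℝ≥0) (j : κ) (x : (Σ j, ι j) → ℝ) :
    gaussianPDFRealPi (blockMean ε j) v x =
      (∏ k, gaussianPDFReal ε v (x ⟨j, k⟩)) *
        ∏ j' ∈ univ.erase j, ∏ k, gaussianPDFReal 0 v (x ⟨j', k⟩) := by
  simp only [gaussianPDFRealPi, blockMean, apply_ite (gaussianPDFReal · v), ite_apply,
    prod_sigma_ite_fst]

theorem sum_blockMean_mul_blockMean (ε : ℝ) (j j' : κ) :
    ∑ i : Σ j, ι j, blockMean ε j i * blockMean ε j' i =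
      if j = j' then Fintype.card (ι j) * ε ^ 2 else 0 := by
  simp only [blockMean, ite_zero_mul_ite_zero]
  rw [← univ_sigma_univ, sum_sigma]
  split_ifs with h
  · subst h
    simp [sum_ite_eq', sq]
  · exact sum_eq_zero fun j₁ _ => sum_eq_zero fun k _ =>
      if_neg fun hj₁ => h (hj₁.1.symm.trans hj₁.2)

theorem sum_sum_ite_eq_else_one (x : κ → ℝ) :
    ∑ j, ∑ j', (if j = j' then x j else 1) =
      ∑ j, x j + ((Fintype.card κ : ℝ) ^ 2 - Fintype.card κ) := by
  have hsplit : ∀ j j' : κ,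
      (if j = j' then x j else 1) = (if j = j' then x j - 1 else 0) + 1 := by
    intro j j'
    split_ifs <;> ring
  simp only [hsplit, sum_add_distrib, sum_ite_eq, mem_univ, if_true, sum_const, card_univ,
    nsmul_eq_mul, mul_one, sum_sub_distrib]
  ring

theorem abs_toReal_withDensity_blockMean_mixture_sub_le [Nonempty κ] (ε : ℝ) {v : ℝ≥0}
    (hv : v ≠ 0) {s : Set ((Σ j, ι j) → ℝ)} (hs : MeasurableSet s) :
    |((volume.withDensity fun x =>
          ENNReal.ofReal (uniformGaussianMixturePDF (blockMean ε) v x)) s).toReal -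
        ((volume.withDensity fun x => ENNReal.ofReal (gaussianPDFRealPi 0 v x)) s).toReal| ≤
      (1 / (2 * √(Fintype.card κ))) *
        √((1 / Fintype.card κ : ℝ) * ∑ j, exp (Fintype.card (ι j) * ε ^ 2 / v) - 1) := by
  refine (abs_toReal_withDensity_uniformGaussianMixturePDF_sub_le _ hv hs).trans_eq ?_
  have hchi : (Fintype.card κ : ℝ)⁻¹ ^ 2 *
        ∑ j, ∑ j', exp ((∑ i : Σ j, ι j, blockMean ε j i * blockMean ε j' i) / v) - 1 =
      (1 / Fintype.card κ) *
        ((1 / Fintype.card κ : ℝ) * ∑ j, exp (Fintype.card (ι j) * ε ^ 2 / v) - 1) := by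
    simp only [sum_blockMean_mul_blockMean, ite_div, zero_div, apply_ite exp, exp_zero,
      sum_sum_ite_eq_else_one]
    generalize ∑ j, exp (Fintype.card (ι j) * ε ^ 2 / v) = S
    field_simp
    ring
  rw [hchi, sqrt_mul (by positivity), sqrt_div' _ (Nat.cast_nonneg _), sqrt_one]
  ring

end BlockMeans

/-- Gaussian version of the minimax lower bound: with `p = φ_{0,σ}` and `q = φ_{ε,σ}`
Gaussian densities, let `Q` be the product measure on `ℝ^N` (coordinates indexed by
`(j,k)`, `j < d`, `k < m j`) with all coordinates of density `p`, and `P` the measure with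
density `(1/d) ∑_j ∏_{k} q(b_j^{(k)}) ∏_{j'≠j} ∏_k p(b_{j'}^{(k)})`. Then
`TV(P, Q) ≤ (1/(2√d)) · ((1/d) ∑_j exp(m_j ε²/σ²) - 1)^{1/2}`, and any hypothesis test has
total error probability at least `1` minus that bound. -/
theorem tv_bound_mixture_gaussian (σ ε : ℝ) (hσ : 0 < σ)
    (p q : ℝ → ℝ)
    (hp : ∀ x, p x =
      (1 / Real.sqrt (2 * Real.pi * σ ^ 2)) * Real.exp (-(x - 0) ^ 2 / (2 * σ ^ 2)))
    (hq : ∀ x, q x =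
      (1 / Real.sqrt (2 * Real.pi * σ ^ 2)) * Real.exp (-(x - ε) ^ 2 / (2 * σ ^ 2)))
    (d : ℕ) (hd : 1 ≤ d) (m : Fin d → ℕ)
    (P Q : Measure (((j : Fin d) × Fin (m j)) → ℝ))
    (hQ : Q = volume.withDensity fun b => ENNReal.ofReal (∏ i, p (b i)))
    (hP : P = volume.withDensity fun b => ENNReal.ofReal
      ((1 / d : ℝ) * ∑ j : Fin d,
        (∏ k : Fin (m j), q (b ⟨j, k⟩)) *
          ∏ j' ∈ Finset.univ.erase j, ∏ k : Fin (m j'), p (b ⟨j', k⟩))) :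
    tvDist P Q ≤
        (1 / (2 * Real.sqrt d)) *
          Real.sqrt ((1 / d : ℝ) * ∑ j, Real.exp (m j * ε ^ 2 / σ ^ 2) - 1) ∧
      ∀ Ψ : (((j : Fin d) × Fin (m j)) → ℝ) → Bool, Measurable Ψ →
        (P {b | Ψ b = true}).toReal + (Q {b | Ψ b = false}).toReal ≥
          1 - (1 / (2 * Real.sqrt d)) *
            Real.sqrt ((1 / d : ℝ) * ∑ j, Real.exp (m j * ε ^ 2 / σ ^ 2) - 1) := by
  set v : ℝ≥0 := ⟨σ ^ 2, sq_nonneg σ⟩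
  have hvσ : (v : ℝ) = σ ^ 2 := rfl
  have hv : v ≠ 0 := by rw [← NNReal.coe_ne_zero, hvσ]; exact (pow_pos hσ 2).ne'
  have hp' : p = gaussianPDFReal 0 v :=
    funext fun x => by rw [hp, gaussianPDFReal, one_div]; rfl
  have hq' : q = gaussianPDFReal ε v :=
    funext fun x => by rw [hq, gaussianPDFReal, one_div]; rfl
  have : Nonempty (Fin d) := ⟨⟨0, hd⟩⟩
  have hQ' : Q = volume.withDensity fun b => ENNReal.ofReal (gaussianPDFRealPi 0 v b) := by
    rw [hQ, hp']; rfl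
  have hP' : P = volume.withDensity fun b =>
      ENNReal.ofReal (uniformGaussianMixturePDF (blockMean ε) v b) := by
    simp only [hP, hp', hq', uniformGaussianMixturePDF, gaussianPDFRealPi_blockMean,
      Fintype.card_fin, one_div]
  set B := (1 / (2 * Real.sqrt d)) *
    Real.sqrt ((1 / d : ℝ) * ∑ j, Real.exp (m j * ε ^ 2 / σ ^ 2) - 1)
  have hB : ∀ s, MeasurableSet s → |(P s).toReal - (Q s).toReal| ≤ B := fun s hs => by
    simpa only [← hP', ← hQ', Fintype.card_fin, hvσ] using
      abs_toReal_withDensity_blockMean_mixture_sub_le ε hv hs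
  have : IsProbabilityMeasure Q := hQ' ▸ isProbabilityMeasure_withDensity_ofReal
    (integrable_gaussianPDFRealPi 0 v) (gaussianPDFRealPi_nonneg 0 v)
    (integral_gaussianPDFRealPi_eq_one 0 hv)
  refine ⟨tvDist_le_of_forall_abs_le (by positivity) hB, fun Ψ hΨ => ?_⟩
  have hs : MeasurableSet {b | Ψ b = true} := hΨ (measurableSet_singleton true)
  have hcompl : {b | Ψ b = false} = {b | Ψ b = true}ᶜ := by ext; simp
  rw [hcompl]
  exact one_sub_le_toReal_add_toReal_compl hs (hB _ hs)
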